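/- Let σ : G ⇢ L be a regular support, with r = rk(L). Then for every g ∈ G and every j ∈ {0,…,r}, Σ_{χ ∈ Ĝ : ω_{σ*}(χ) = j} χ(g) = |G| · Σ_{s=0}^{r} γ_σ(r−s)^{−1} · μ_L(r−j, r−s) · μ_≥(r−s, ω_σ(g)) · μ_≤(r−j, r−s). Consequently the pair (ω_σ, ω_{σ*}) is compatible and its Krawtchouk coefficients are K(ω_σ, ω_{σ*})(i,j) = |G| Σ_{s=0}^{r} γ_σ(r−s)^{−1} μ_L(r−j, r−s) μ_≥(r−s, i) μ_≤(r−j, r−s). -/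

import Mathlib

/-!
Summing `χ(g)` over the annihilator `G_σ(T)*` gives, by orthogonality of characters,
`|G| / γ_σ(ρ T)` if `σ(g) ≤ T` and `0` otherwise. Since `T ≤ σ*(χ)` exactly when
`χ ∈ G_σ(T)*`, this is the sum over the up-set `{χ : T ≤ σ*(χ)}`, and Möbius inversion on `L`
turns it into the sum over the fibre `{χ : σ*(χ) = S}`. Summing over the `S` of rank `r - j`
and grouping the `T ≥ σ(g)` by rank, regularity of `L` replaces each count by `μ_≤` and `μ_≥`.
-/

open Finset
open scoped Classical Pointwise

/-- A finite graded lattice of rank `r` (with rank function `ρ`) that is *regular*: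
the counting numbers `μ_≤`, `μ_≥` and the Möbius numbers `μ_L` depend only on ranks. -/
structure RegularLattice (L : Type*) [Lattice L] [BoundedOrder L] [Fintype L] where
  /-- the rank of the lattice -/
  r : ℕ
  /-- the rank function -/
  ρ : L → ℕ
  ρ_bot : ρ ⊥ = 0
  ρ_top : ρ ⊤ = r
  ρ_covby : ∀ S T : L, S ⋖ T → ρ T = ρ S + 1
  /-- the Möbius function of the lattice -/
  mu : L → L → ℤ
  mu_self : ∀ S : L, mu S S = 1
  mu_sum : ∀ S T : L, S < T → mu S T = - ∑ U : L, (if S ≤ U ∧ U < T then mu S U else 0)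
  /-- `μ_≤ s t` : the number of elements of rank `s` below an element of rank `t` -/
  muLE : ℕ → ℕ → ℕ
  card_le : ∀ (s : ℕ) (T : L), Nat.card {S : L // ρ S = s ∧ S ≤ T} = muLE s (ρ T)
  /-- `μ_≥ s t` : the number of elements of rank `s` above an element of rank `t` -/
  muGE : ℕ → ℕ → ℕ
  card_ge : ∀ (s : ℕ) (T : L), Nat.card {S : L // ρ S = s ∧ T ≤ S} = muGE s (ρ T)
  /-- `μ_L s t` : the common value of the Möbius function on pairs of ranks `s ≤ t`,
  with the convention `μ_L s t = 0` for `s > t` -/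
  muN : ℕ → ℕ → ℤ
  mu_eq : ∀ S T : L, S ≤ T → mu S T = muN (ρ S) (ρ T)
  muN_zero : ∀ s t : ℕ, t < s → muN s t = 0

/-- A regular support `σ : G ⇢ L` on a finite abelian group `G` with values in a
regular lattice `L`, together with its cardinality invariant `γ`. -/
structure RegularSupport (L : Type*) [Lattice L] [BoundedOrder L] [Fintype L]
    (G : Type*) [AddCommGroup G] [Fintype G] (RL : RegularLattice L) where
  /-- the support function -/
  σ : G → L
  supp_zero : ∀ g : G, σ g = ⊥ ↔ g = 0
  supp_neg : ∀ g : G, σ (-g) = σ g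
  supp_add : ∀ g₁ g₂ : G, σ (g₁ + g₂) ≤ σ g₁ ⊔ σ g₂
  supp_sup : ∀ S₁ S₂ : L,
    {g : G | σ g ≤ S₁ ⊔ S₂} = {g : G | σ g ≤ S₁} + {g : G | σ g ≤ S₂}
  /-- `γ s` : the common cardinality of `G_σ(S)` over elements `S` of rank `s` -/
  γ : ℕ → ℕ
  card_supp : ∀ S : L, Nat.card {g : G // σ g ≤ S} = γ (RL.ρ S)

/-- The dual support `σ* : Ĝ → L`, `σ*(χ) = ⋁ {S ∈ L : χ ∈ G_σ(S)*}`. -/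
noncomputable def RegularSupport.dualSupp {L : Type*} [Lattice L] [BoundedOrder L] [Fintype L]
    {G : Type*} [AddCommGroup G] [Fintype G] {RL : RegularLattice L}
    (RS : RegularSupport L G RL) (χ : AddChar G ℂˣ) : L :=
  (Finset.univ.filter (fun S : L => ∀ g : G, RS.σ g ≤ S → χ g = 1)).sup id

namespace AddChar

variable {A M : Type*} [AddGroup A] [Monoid M]

def unitsEquiv : AddChar A Mˣ ≃ AddChar A M where
  toFun χ := (Units.coeHom M).compAddChar χ
  invFun ψ :=
    { toFun := fun a => ⟨ψ a, ψ (-a), by rw [← map_add_eq_mul, add_neg_cancel, map_zero_eq_one],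
        by rw [← map_add_eq_mul, neg_add_cancel, map_zero_eq_one]⟩
      map_zero_eq_one' := Units.ext ψ.map_zero_eq_one
      map_add_eq_mul' := fun a b => Units.ext (ψ.map_add_eq_mul a b) }
  left_inv _ := DFunLike.ext _ _ fun _ => Units.ext rfl
  right_inv _ := DFunLike.ext _ _ fun _ => rfl

@[simp]
lemma unitsEquiv_apply (χ : AddChar A Mˣ) (a : A) : unitsEquiv χ a = χ a := rfl

end AddChar

section Orthogonality

variable {G : Type*} [AddCommGroup G] [Fintype G]

lemma AddChar.sum_units_apply_eq_ite [Fintype (AddChar G ℂˣ)] (a : G) :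
    ∑ χ : AddChar G ℂˣ, ((χ a : ℂˣ) : ℂ) = if a = 0 then (Fintype.card G : ℂ) else 0 := by
  rw [← AddChar.sum_apply_eq_ite]
  exact Fintype.sum_equiv AddChar.unitsEquiv _ _ fun _ => rfl

lemma AddSubgroup.sum_units_char_apply_eq_ite (H : AddSubgroup G) (χ : AddChar G ℂˣ) :
    ∑ h : H, ((χ h : ℂˣ) : ℂ) = if ∀ h ∈ H, χ h = 1 then (Nat.card H : ℂ) else 0 := by
  have hχ : AddChar.unitsEquiv (χ.compAddMonoidHom H.subtype) = 0 ↔ ∀ h ∈ H, χ h = 1 := by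
    simp only [AddChar.eq_zero_iff, AddChar.unitsEquiv_apply, AddChar.compAddMonoidHom_apply,
      Units.val_eq_one, Subtype.forall, AddSubgroup.coe_subtype]
  rw [Nat.card_eq_fintype_card, ← if_congr hχ rfl rfl, ← AddChar.sum_eq_ite]
  rfl

/-- Summing a character over `H` detects the annihilator `H*`; summing over `H*` then detects
`H` by the orthogonality of characters of `G`. -/
lemma AddSubgroup.card_mul_sum_units_char_annihilator [Fintype (AddChar G ℂˣ)]
    (H : AddSubgroup G) (g : G) :
    (Nat.card H : ℂ) * ∑ χ : AddChar G ℂˣ, (if ∀ h ∈ H, χ h = 1 then ((χ g : ℂˣ) : ℂ) else 0)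
      = if g ∈ H then (Fintype.card G : ℂ) else 0 := by
  calc _ = ∑ χ : AddChar G ℂˣ, ∑ h : H, ((χ (h + g) : ℂˣ) : ℂ) := by
        simp only [mul_sum, AddChar.map_add_eq_mul, Units.val_mul, ← sum_mul,
          H.sum_units_char_apply_eq_ite, mul_ite, ite_mul, mul_zero, zero_mul]
    _ = ∑ h : H, if (h : G) = -g then (Fintype.card G : ℂ) else 0 := by
        rw [sum_comm]
        simp only [AddChar.sum_units_apply_eq_ite, add_eq_zero_iff_eq_neg]
    _ = ∑ x ∈ univ.filter (· ∈ H), if x = -g then (Fintype.card G : ℂ) else 0 :=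
        (sum_subtype _ (fun _ => by simp) fun x => if x = -g then (Fintype.card G : ℂ) else 0).symm
    _ = _ := by rw [sum_ite_eq']; simp

end Orthogonality

namespace RegularLattice

variable {L : Type*} [Lattice L] [BoundedOrder L] [Fintype L] (RL : RegularLattice L)

theorem strictMono_ρ : StrictMono RL.ρ :=
  letI := Fintype.toLocallyFiniteOrder (α := L)
  (strictMono_iff_forall_covBy _).2 fun S T h => by rw [RL.ρ_covby S T h]; omega

theorem ρ_le_r (S : L) : RL.ρ S ≤ RL.r :=
  RL.ρ_top ▸ RL.strictMono_ρ.monotone le_top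

theorem sum_mu_of_le_of_le (S U : L) :
    ∑ T with S ≤ T ∧ T ≤ U, RL.mu S T = if S = U then 1 else 0 := by
  rcases eq_or_ne S U with rfl | hne
  · rw [if_pos rfl, sum_eq_single_of_mem S (by simp) fun T hT hne => ?_, RL.mu_self]
    simp only [mem_filter, mem_univ, true_and] at hT
    exact absurd (le_antisymm hT.2 hT.1) hne
  by_cases hSU : S ≤ U
  · have hIcc : univ.filter (fun T => S ≤ T ∧ T ≤ U)
        = insert U (univ.filter fun T => S ≤ T ∧ T < U) := by
      ext T; simp only [mem_filter, mem_univ, true_and, mem_insert]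
      constructor
      · rintro ⟨h₁, h₂⟩; exact h₂.eq_or_lt.imp id (⟨h₁, ·⟩)
      · rintro (rfl | ⟨h₁, h₂⟩); exacts [⟨hSU, le_rfl⟩, ⟨h₁, h₂.le⟩]
    rw [if_neg hne, hIcc, sum_insert (by simp), RL.mu_sum S U (hSU.lt_of_ne hne),
      sum_filter, neg_add_cancel]
  · rw [if_neg hne, sum_eq_zero fun T hT => absurd ?_ hSU]
    simp only [mem_filter, mem_univ, true_and] at hT
    exact hT.1.trans hT.2

/-- Möbius inversion over the up-sets `{T ≤ φ i}`. -/
theorem sum_eq_sum_mu_mul_sum {ι R : Type*} [Fintype ι] [CommRing R] (φ : ι → L) (x : ι → R)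
    (S : L) :
    ∑ i with φ i = S, x i = ∑ T with S ≤ T, (RL.mu S T : R) * ∑ i with T ≤ φ i, x i := by
  simp only [mul_sum]
  rw [sum_comm' (t' := univ) (s' := fun i => univ.filter fun T => S ≤ T ∧ T ≤ φ i)
    (by simp), sum_filter]
  refine sum_congr rfl fun i _ => ?_
  have hmu := congrArg (Int.cast : ℤ → R) (RL.sum_mu_of_le_of_le S (φ i))
  push_cast at hmu
  rw [← sum_mul, hmu, ite_mul, one_mul, zero_mul, eq_comm (a := φ i)]

theorem card_rank_le (s : ℕ) (T : L) : #{S | RL.ρ S = s ∧ S ≤ T} = RL.muLE s (RL.ρ T) := by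
  rw [← RL.card_le s T, Nat.card_eq_fintype_card, Fintype.card_subtype]

theorem card_rank_ge (t : ℕ) (U : L) : #{T | RL.ρ T = t ∧ U ≤ T} = RL.muGE t (RL.ρ U) := by
  rw [← RL.card_ge t U, Nat.card_eq_fintype_card, Fintype.card_subtype]

theorem sum_mu_rank_le {R : Type*} [CommRing R] (s : ℕ) (T : L) :
    ∑ S with RL.ρ S = s ∧ S ≤ T, (RL.mu S T : R) = RL.muLE s (RL.ρ T) * RL.muN s (RL.ρ T) := by
  rw [sum_congr rfl fun S hS => by
      rw [RL.mu_eq S T (mem_filter.1 hS).2.2, (mem_filter.1 hS).2.1],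
    sum_const, RL.card_rank_le, nsmul_eq_mul]

theorem sum_ge_eq_sum_range {R : Type*} [CommRing R] (U : L) (F : ℕ → R) :
    ∑ T with U ≤ T, F (RL.ρ T) = ∑ t ∈ range (RL.r + 1), RL.muGE t (RL.ρ U) * F t := by
  rw [← sum_fiberwise_of_maps_to (g := RL.ρ) (t := range (RL.r + 1))
    fun T _ => mem_range.2 (Nat.lt_succ_of_le (RL.ρ_le_r T))]
  refine sum_congr rfl fun t _ => ?_
  rw [filter_comm, filter_filter, sum_congr rfl fun T hT => by rw [(mem_filter.1 hT).2.1],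
    sum_const, RL.card_rank_ge, nsmul_eq_mul]

end RegularLattice

namespace RegularSupport

variable {L : Type*} [Lattice L] [BoundedOrder L] [Fintype L]
  {G : Type*} [AddCommGroup G] [Fintype G] {RL : RegularLattice L} (RS : RegularSupport L G RL)

theorem σ_zero : RS.σ 0 = ⊥ := (RS.supp_zero 0).2 rfl

def suppSubgroup (S : L) : AddSubgroup G where
  carrier := {g | RS.σ g ≤ S}
  zero_mem' := by simp [RS.σ_zero]
  add_mem' {a b} ha hb := (RS.supp_add a b).trans (sup_le ha hb)
  neg_mem' {a} ha := by simpa [RS.supp_neg] using ha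

@[simp]
theorem mem_suppSubgroup {g : G} {S : L} : g ∈ RS.suppSubgroup S ↔ RS.σ g ≤ S := Iff.rfl

theorem card_suppSubgroup (S : L) : Nat.card (RS.suppSubgroup S) = RS.γ (RL.ρ S) :=
  RS.card_supp S

theorem γ_ne_zero (S : L) : RS.γ (RL.ρ S) ≠ 0 := by
  rw [← RS.card_suppSubgroup]
  exact Nat.card_pos.ne'

/-- The `S` with `χ ∈ G_σ(S)*` contain `⊥` and are closed under `⊔` by `supp_sup`, so `σ*(χ)` is
the largest of them. -/
theorem le_dualSupp_iff (χ : AddChar G ℂˣ) (S : L) :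
    S ≤ RS.dualSupp χ ↔ ∀ g ∈ RS.suppSubgroup S, χ g = 1 := by
  refine ⟨fun hS g hg => ?_, fun h => Finset.le_sup (f := id) (by simpa using h)⟩
  suffices ∀ g, RS.σ g ≤ RS.dualSupp χ → χ g = 1 from this g (hS.trans' hg)
  refine Finset.sup_induction (p := fun X : L => ∀ g : G, RS.σ g ≤ X → χ g = 1) ?_ ?_ ?_
  · intro g hg
    rw [(RS.supp_zero g).1 (le_bot_iff.1 hg), AddChar.map_zero_eq_one]
  · intro S₁ h₁ S₂ h₂ g hg
    obtain ⟨a, ha, b, hb, rfl⟩ : g ∈ {g : G | RS.σ g ≤ S₁} + {g : G | RS.σ g ≤ S₂} := by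
      rw [← RS.supp_sup]; exact hg
    rw [AddChar.map_add_eq_mul, h₁ a ha, h₂ b hb, one_mul]
  · intro S hS
    exact (mem_filter.1 hS).2

variable [Fintype (AddChar G ℂˣ)]

theorem sum_char_le_dualSupp (g : G) (T : L) :
    ∑ χ : AddChar G ℂˣ with T ≤ RS.dualSupp χ, ((χ g : ℂˣ) : ℂ)
      = if RS.σ g ≤ T then (Fintype.card G : ℂ) / RS.γ (RL.ρ T) else 0 := by
  have h := (RS.suppSubgroup T).card_mul_sum_units_char_annihilator g
  simp only [RS.card_suppSubgroup, ← RS.le_dualSupp_iff, ← sum_filter] at h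
  rw [RS.mem_suppSubgroup] at h
  rw [← zero_div (RS.γ (RL.ρ T) : ℂ), ← ite_div, eq_div_iff (by exact_mod_cast RS.γ_ne_zero T),
    mul_comm, h]

theorem sum_char_rank_dualSupp (g : G) {j : ℕ} (hj : j ≤ RL.r) :
    ∑ χ : AddChar G ℂˣ,
        (if RL.r - RL.ρ (RS.dualSupp χ) = j then ((χ g : ℂˣ) : ℂ) else 0)
      = (Fintype.card G : ℂ)
          * ∑ s ∈ range (RL.r + 1),
              ((RS.γ (RL.r - s) : ℂ))⁻¹ * (RL.muN (RL.r - j) (RL.r - s) : ℂ)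
                * (RL.muGE (RL.r - s) (RL.ρ (RS.σ g)) : ℂ)
                * (RL.muLE (RL.r - j) (RL.r - s) : ℂ) := by
  set F : ℕ → ℂ := fun t =>
    (Fintype.card G : ℂ) / RS.γ t * RL.muLE (RL.r - j) t * RL.muN (RL.r - j) t
  calc _ = ∑ S with RL.ρ S = RL.r - j, ∑ χ : AddChar G ℂˣ with RS.dualSupp χ = S,
          ((χ g : ℂˣ) : ℂ) := by
        rw [sum_comm' (t' := univ.filter fun χ => RL.r - RL.ρ (RS.dualSupp χ) = j)
          (s' := fun χ => {RS.dualSupp χ}), sum_filter]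
        · simp only [sum_singleton]
        · intro S χ
          have := RL.ρ_le_r (RS.dualSupp χ)
          simp only [mem_filter, mem_univ, true_and, mem_singleton]
          grind
    _ = ∑ S with RL.ρ S = RL.r - j, ∑ T with S ≤ T,
          (RL.mu S T : ℂ) * ∑ χ : AddChar G ℂˣ with T ≤ RS.dualSupp χ, ((χ g : ℂˣ) : ℂ) := by
        simp only [RL.sum_eq_sum_mu_mul_sum]
    _ = ∑ T, (∑ S with RL.ρ S = RL.r - j ∧ S ≤ T, (RL.mu S T : ℂ))
          * ∑ χ : AddChar G ℂˣ with T ≤ RS.dualSupp χ, ((χ g : ℂˣ) : ℂ) := by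
        simp only [sum_mul]
        exact sum_comm' (by simp)
    _ = ∑ T with RS.σ g ≤ T, F (RL.ρ T) := by
        simp only [RL.sum_mu_rank_le, RS.sum_char_le_dualSupp, mul_ite, mul_zero, F]
        rw [sum_filter]
        exact sum_congr rfl fun T _ => by split_ifs <;> ring
    _ = ∑ t ∈ range (RL.r + 1), RL.muGE t (RL.ρ (RS.σ g)) * F t := RL.sum_ge_eq_sum_range _ _
    _ = _ := by
        rw [mul_sum, ← sum_range_reflect]
        refine sum_congr rfl fun s hs => ?_
        rw [show RL.r + 1 - 1 - s = RL.r - s by omega]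
        ring

end RegularSupport

/-- For every `g ∈ G` and every `0 ≤ j ≤ r`,
`Σ_{χ : ω_{σ*}(χ) = j} χ(g) = |G| Σ_{s=0}^r γ_σ(r−s)⁻¹ μ_L(r−j,r−s) μ_≥(r−s, ω_σ(g)) μ_≤(r−j,r−s)`.
Consequently the pair `(ω_σ, ω_{σ*})` is compatible (the first conjunct) with these
sums as Krawtchouk coefficients `K(ω_σ, ω_{σ*})(i, j)` for `i = ω_σ(g)`.
Here `ω_σ(g) = ρ(σ(g))` and `ω_{σ*}(χ) = r − ρ(σ*(χ))`. -/
theorem stmt_9 {L : Type*} [Lattice L] [BoundedOrder L] [Fintype L]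
    {G : Type*} [AddCommGroup G] [Fintype G] [Fintype (AddChar G ℂˣ)]
    {RL : RegularLattice L} (RS : RegularSupport L G RL) :
    (∀ g₁ g₂ : G, RL.ρ (RS.σ g₁) = RL.ρ (RS.σ g₂) →
      ∀ j : ℕ,
        ∑ χ : AddChar G ℂˣ,
            (if RL.r - RL.ρ (RS.dualSupp χ) = j then ((χ g₁ : ℂˣ) : ℂ) else 0)
          = ∑ χ : AddChar G ℂˣ,
              (if RL.r - RL.ρ (RS.dualSupp χ) = j then ((χ g₂ : ℂˣ) : ℂ) else 0)) ∧
    (∀ g : G, ∀ j : ℕ, j ≤ RL.r →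
      ∑ χ : AddChar G ℂˣ,
          (if RL.r - RL.ρ (RS.dualSupp χ) = j then ((χ g : ℂˣ) : ℂ) else 0)
        = (Fintype.card G : ℂ)
            * ∑ s ∈ Finset.range (RL.r + 1),
                ((RS.γ (RL.r - s) : ℂ))⁻¹ * (RL.muN (RL.r - j) (RL.r - s) : ℂ)
                  * (RL.muGE (RL.r - s) (RL.ρ (RS.σ g)) : ℂ)
                  * (RL.muLE (RL.r - j) (RL.r - s) : ℂ)) := by
  refine ⟨fun g₁ g₂ hρ j => ?_, fun g j hj => RS.sum_char_rank_dualSupp g hj⟩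
  by_cases hj : j ≤ RL.r
  · rw [RS.sum_char_rank_dualSupp g₁ hj, RS.sum_char_rank_dualSupp g₂ hj, hρ]
  · have hzero (g : G) : ∑ χ : AddChar G ℂˣ,
        (if RL.r - RL.ρ (RS.dualSupp χ) = j then ((χ g : ℂˣ) : ℂ) else 0) = 0 :=
      sum_eq_zero fun χ _ => if_neg (by omega)
    rw [hzero, hzero]
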